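/- If η ∈ ℂ^V satisfies μ_p · ‖η‖_{ℓ^p} < 1, then for every N ≥ 0 the tail of the forward Born series satisfies ‖Σ_{j=N+1}^∞ K_j(η, …, η)‖_{ℓ^p(R×S)} ≤ ν_p · ‖η‖_{ℓ^p}^{N+1} · μ_p^{N} / (1 − μ_p ‖η‖_{ℓ^p}). -/

import Mathlib

open scoped ENNReal

/-- The ℓ^p norm of a finitely indexed family, `p ∈ [1, ∞]`. -/
noncomputable def lpNorm (p : ℝ≥0∞) {ι E : Type*} [Fintype ι] [SeminormedAddCommGroup E]
    (f : ι → E) : ℝ :=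
  if p = ∞ then ⨆ i, ‖f i‖ else (∑ i, ‖f i‖ ^ p.toReal) ^ (1 / p.toReal)

variable {V R S : Type*} [Fintype V] [DecidableEq V] [Fintype R] [Fintype S]

/-- The multilinear forward Born operator: `bornK α0 B G C j` is `K_j`, mapping
`(η_1, …, η_j)` (given as the first `j` values of an `ℕ`-indexed family) to
`(r, s) ↦ (−α0)^j (B D_{η_1} G D_{η_2} G ⋯ G D_{η_j} C)(r, s)`; `K_0 := 0` is junk. -/
noncomputable def bornK (α0 : ℝ) (B : Matrix R V ℂ) (G : Matrix V V ℂ) (C : Matrix V S ℂ) :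
    ℕ → (ℕ → V → ℂ) → R × S → ℂ
  | 0, _ => 0
  | j + 1, η => fun rs =>
      (-(α0 : ℂ)) ^ (j + 1) *
        (B * Matrix.diagonal (η 0) *
          (List.ofFn fun i : Fin j => G * Matrix.diagonal (η (i.1 + 1))).prod * C) rs.1 rs.2

/-- `μ_p = α0 · max_{v ∈ V} ‖row v of G‖_{ℓ^q}` (this depends only on `q`). -/
noncomputable def muConst (α0 : ℝ) (q : ℝ≥0∞) (G : Matrix V V ℂ) : ℝ :=
  α0 * ⨆ v : V, lpNorm q (G v)

/-- `ν_p = α0 · (Σ_{r ∈ R} ‖row r of B‖_q^p)^{1/p} · (Σ_{s ∈ S} ‖column s of C‖_q^p)^{1/p}`,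
with maxima replacing sums when `p = ∞`. -/
noncomputable def nuConst (α0 : ℝ) (p q : ℝ≥0∞) (B : Matrix R V ℂ) (C : Matrix V S ℂ) : ℝ :=
  α0 * lpNorm p (fun r : R => lpNorm q (B r)) * lpNorm p (fun s : S => lpNorm q fun v => C v s)

/-- `C_p = min_{‖η‖_p = 1} ‖K_1 η‖_p`. -/
noncomputable def CpConst (p : ℝ≥0∞) (α0 : ℝ) (B : Matrix R V ℂ) (G : Matrix V V ℂ)
    (C : Matrix V S ℂ) : ℝ :=
  sInf {t : ℝ | ∃ η : V → ℂ, lpNorm p η = 1 ∧ t = lpNorm p (bornK α0 B G C 1 fun _ => η)}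

/-! Write `h = ‖η‖_p` and `γ = max_v ‖G_v‖_q`. By Hölder's inequality on each row, `G D_η` maps a
vector whose entries are bounded by `M` to one whose entries are bounded by `γ h M`. So every entry
of `(G D_η)^j C` is at most `(γ h)^j ‖C_{·s}‖_q`, and one more Hölder step against the row `B_r`
bounds `|K_{j+1}(η, …, η)(r, s)|` by `α0^{j+1} h^{j+1} γ^j ‖B_r‖_q ‖C_{·s}‖_q`. The `ℓ^p` norm of
`(r, s) ↦ ‖B_r‖_q ‖C_{·s}‖_q` is at most `ν_p / α0`, so `‖K_{j+1}(η, …, η)‖_p ≤ ν_p h^{j+1} μ_p^j`.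
The tail is therefore dominated by a geometric series with ratio `μ_p h < 1`. -/

open Matrix ENNReal

lemma le_ciSup_norm {ι E : Type*} [Finite ι] [SeminormedAddCommGroup E] (f : ι → E) (i : ι) :
    ‖f i‖ ≤ ⨆ j, ‖f j‖ :=
  le_ciSup (f := fun j => ‖f j‖) (Set.finite_range _).bddAbove i

section lpNorm

variable {ι E F : Type*} [Fintype ι] [SeminormedAddCommGroup E] [SeminormedAddCommGroup F]
  {p q : ℝ≥0∞}

lemma lpNorm_nonneg (f : ι → E) : 0 ≤ lpNorm p f := by
  unfold lpNorm
  split_ifs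
  · exact Real.iSup_nonneg fun i => norm_nonneg _
  · positivity

lemma lpNorm_eq_norm_toLp [Fact (1 ≤ p)] (f : ι → E) : lpNorm p f = ‖WithLp.toLp p f‖ := by
  rcases eq_or_ne p ∞ with rfl | hp
  · simp [lpNorm, PiLp.norm_eq_ciSup]
  · simp [lpNorm, hp, PiLp.norm_eq_sum (toReal_pos (one_pos.trans_le Fact.out).ne' hp)]

lemma norm_apply_le_lpNorm [Fact (1 ≤ p)] (f : ι → E) (i : ι) : ‖f i‖ ≤ lpNorm p f := by
  rw [lpNorm_eq_norm_toLp]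
  exact PiLp.norm_apply_le (WithLp.toLp p f) i

lemma lpNorm_smul [Fact (1 ≤ p)] (c : ℝ) (f : ι → ℝ) : lpNorm p (c • f) = |c| * lpNorm p f := by
  rw [lpNorm_eq_norm_toLp, lpNorm_eq_norm_toLp, WithLp.toLp_smul, norm_smul, Real.norm_eq_abs]

lemma lpNorm_norm (f : ι → E) : lpNorm p (fun i => ‖f i‖) = lpNorm p f := by
  simp [lpNorm]

lemma lpNorm_one_eq_sum (f : ι → E) : lpNorm 1 f = ∑ i, ‖f i‖ := by
  simp [lpNorm]

lemma lpNorm_mono {f : ι → E} {g : ι → F} (h : ∀ i, ‖f i‖ ≤ ‖g i‖) :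
    lpNorm p f ≤ lpNorm p g := by
  unfold lpNorm
  split_ifs
  · exact Real.iSup_le (fun i => (h i).trans (le_ciSup_norm g i))
      (Real.iSup_nonneg fun i => norm_nonneg _)
  · gcongr with i
    exact h i

lemma lpNorm_mul_le_of_norm_le {A : Type*} [SeminormedRing A] [Fact (1 ≤ p)] {M : ℝ}
    (hM : 0 ≤ M) (x y : ι → A) (hy : ∀ i, ‖y i‖ ≤ M) :
    lpNorm p (fun i => x i * y i) ≤ lpNorm p x * M := by
  calc lpNorm p (fun i => x i * y i) ≤ lpNorm p (M • fun i => ‖x i‖) := by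
        refine lpNorm_mono fun i => ?_
        rw [Pi.smul_apply, smul_eq_mul, Real.norm_of_nonneg (by positivity), mul_comm M]
        exact (norm_mul_le _ _).trans (mul_le_mul_of_nonneg_left (hy i) (norm_nonneg _))
    _ = lpNorm p x * M := by rw [lpNorm_smul, abs_of_nonneg hM, lpNorm_norm, mul_comm]

lemma lpNorm_prod_mul_le {κ : Type*} [Fintype κ] (a : ι → ℝ) (b : κ → ℝ) :
    lpNorm p (fun ik : ι × κ => a ik.1 * b ik.2) ≤ lpNorm p a * lpNorm p b := by
  unfold lpNorm
  split_ifs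
  · have ha := Real.iSup_nonneg fun i => norm_nonneg (a i)
    refine Real.iSup_le (fun ik => ?_) (mul_nonneg ha (Real.iSup_nonneg fun k => norm_nonneg _))
    rw [norm_mul]
    exact mul_le_mul (le_ciSup_norm a ik.1) (le_ciSup_norm b ik.2) (norm_nonneg _) ha
  · rw [← Real.mul_rpow (by positivity) (by positivity), Finset.sum_mul_sum,
      ← Finset.sum_product']
    simp only [norm_mul, Real.mul_rpow (norm_nonneg _) (norm_nonneg _), Finset.univ_product_univ,
      le_refl]

lemma sum_norm_mul_norm_le_lpNorm_top_mul_lpNorm_one (f : ι → E) (g : ι → F) :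
    ∑ i, ‖f i‖ * ‖g i‖ ≤ lpNorm ∞ f * lpNorm 1 g := by
  rw [lpNorm_one_eq_sum, Finset.mul_sum]
  gcongr with i
  exact norm_apply_le_lpNorm f i

theorem sum_norm_mul_norm_le_lpNorm_mul_lpNorm [p.HolderConjugate q] (f : ι → E) (g : ι → F) :
    ∑ i, ‖f i‖ * ‖g i‖ ≤ lpNorm p f * lpNorm q g := by
  rcases eq_or_ne p ∞ with rfl | hp
  · obtain rfl : q = 1 := (HolderConjugate.eq_top_iff_eq_one ∞ q).1 rfl
    exact sum_norm_mul_norm_le_lpNorm_top_mul_lpNorm_one f g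
  rcases eq_or_ne q ∞ with rfl | hq
  · obtain rfl : p = 1 := (HolderConjugate.eq_top_iff_eq_one ∞ p).1 rfl
    simpa only [mul_comm] using sum_norm_mul_norm_le_lpNorm_top_mul_lpNorm_one g f
  simpa [lpNorm, hp, hq] using Real.inner_le_Lp_mul_Lq_of_nonneg Finset.univ
    (HolderConjugate.toReal_of_ne_top hp hq) (fun i _ => norm_nonneg (f i))
    (fun i _ => norm_nonneg (g i))

lemma norm_sum_mul_mul_le {A : Type*} [SeminormedRing A] [q.HolderConjugate p] (a b x : ι → A)
    {M : ℝ} (hM : 0 ≤ M) (hx : ∀ i, ‖x i‖ ≤ M) :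
    ‖∑ i, a i * (b i * x i)‖ ≤ lpNorm q a * (lpNorm p b * M) := by
  have : Fact (1 ≤ p) := ⟨HolderConjugate.one_le p q⟩
  calc ‖∑ i, a i * (b i * x i)‖ ≤ ∑ i, ‖a i‖ * ‖b i * x i‖ :=
        (norm_sum_le _ _).trans (Finset.sum_le_sum fun i _ => norm_mul_le _ _)
    _ ≤ lpNorm q a * lpNorm p (fun i => b i * x i) :=
        sum_norm_mul_norm_le_lpNorm_mul_lpNorm _ _
    _ ≤ lpNorm q a * (lpNorm p b * M) :=
        mul_le_mul_of_nonneg_left (lpNorm_mul_le_of_norm_le hM b x hx) (lpNorm_nonneg a)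

lemma lpNorm_tsum_le {G : Type*} [NormedAddCommGroup G] [NormedSpace ℝ G] [Fact (1 ≤ p)]
    {f : ℕ → ι → G} {b : ℕ → ℝ} (hb : Summable b) (hf : ∀ j, lpNorm p (f j) ≤ b j) :
    lpNorm p (∑' j, f j) ≤ ∑' j, b j := by
  have hmap : WithLp.toLp p (∑' j, f j) = ∑' j, WithLp.toLp p (f j) :=
    (PiLp.continuousLinearEquiv p ℝ fun _ : ι => G).symm.map_tsum
  rw [lpNorm_eq_norm_toLp, hmap]
  exact tsum_of_norm_bounded hb.hasSum fun j => (lpNorm_eq_norm_toLp (f j)).symm.trans_le (hf j)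

end lpNorm

lemma muConst_nonneg {n : Type*} [Fintype n] {α0 : ℝ} (hα0 : 0 ≤ α0) (q : ℝ≥0∞)
    (G : Matrix n n ℂ) : 0 ≤ muConst α0 q G :=
  mul_nonneg hα0 (Real.iSup_nonneg fun v => lpNorm_nonneg (G v))

section Born

variable {l n o : Type*} [Fintype n] [DecidableEq n] {p q : ℝ≥0∞} [p.HolderConjugate q] {α0 : ℝ}
  (B : Matrix l n ℂ) (G : Matrix n n ℂ) (C : Matrix n o ℂ) (η : n → ℂ)

lemma norm_pow_mul_diagonal_mul_apply_le {γ : ℝ} (hG : ∀ v, lpNorm q (G v) ≤ γ) (k : ℕ)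
    (v : n) (s : o) :
    ‖((G * diagonal η) ^ k * C) v s‖ ≤ (γ * lpNorm p η) ^ k * lpNorm q fun u => C u s := by
  have : Fact (1 ≤ q) := ⟨HolderConjugate.one_le q p⟩
  induction k generalizing v with
  | zero => simpa using norm_apply_le_lpNorm (fun u => C u s) v
  | succ k ih =>
    have hγ : 0 ≤ γ := (lpNorm_nonneg _).trans (hG v)
    have hM : 0 ≤ (γ * lpNorm p η) ^ k * lpNorm q fun u => C u s :=
      mul_nonneg (pow_nonneg (mul_nonneg hγ (lpNorm_nonneg η)) k) (lpNorm_nonneg _)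
    rw [pow_succ', Matrix.mul_assoc, mul_apply]
    simp only [mul_diagonal, mul_assoc]
    calc _ ≤ lpNorm q (G v) * (lpNorm p η * ((γ * lpNorm p η) ^ k * lpNorm q fun u => C u s)) :=
          norm_sum_mul_mul_le _ _ _ hM ih
      _ ≤ γ * (lpNorm p η * ((γ * lpNorm p η) ^ k * lpNorm q fun u => C u s)) :=
          mul_le_mul_of_nonneg_right (hG v) (mul_nonneg (lpNorm_nonneg η) hM)
      _ = _ := by ring

lemma bornK_const_apply (j : ℕ) (r : l) (s : o) :
    bornK α0 B G C (j + 1) (fun _ => η) (r, s) =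
      (-(α0 : ℂ)) ^ (j + 1) * ∑ v, B r v * (η v * ((G * diagonal η) ^ j * C) v s) := by
  simp only [bornK, List.ofFn_const, List.prod_replicate]
  rw [Matrix.mul_assoc, Matrix.mul_assoc, mul_apply]
  simp only [diagonal_mul]

lemma norm_bornK_const_apply_le (hα0 : 0 ≤ α0) (j : ℕ) (r : l) (s : o) :
    ‖bornK α0 B G C (j + 1) (fun _ => η) (r, s)‖ ≤
      α0 * lpNorm p η ^ (j + 1) * muConst α0 q G ^ j *
        (lpNorm q (B r) * lpNorm q fun v => C v s) := by
  set γ := ⨆ v, lpNorm q (G v)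
  have hcol := norm_pow_mul_diagonal_mul_apply_le (p := p) (q := q) G C η
    (le_ciSup (Set.finite_range _).bddAbove) j
  have hM : 0 ≤ (γ * lpNorm p η) ^ j * lpNorm q fun u => C u s :=
    mul_nonneg (pow_nonneg (mul_nonneg (Real.iSup_nonneg fun v => lpNorm_nonneg (G v))
      (lpNorm_nonneg η)) j) (lpNorm_nonneg _)
  rw [bornK_const_apply, norm_mul, norm_pow, norm_neg, Complex.norm_real, Real.norm_of_nonneg hα0]
  calc _ ≤ α0 ^ (j + 1) *
        (lpNorm q (B r) * (lpNorm p η * ((γ * lpNorm p η) ^ j * lpNorm q fun u => C u s))) :=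
        mul_le_mul_of_nonneg_left (norm_sum_mul_mul_le _ _ _ hM (hcol · s)) (by positivity)
    _ = _ := by rw [muConst]; ring

lemma lpNorm_bornK_const_le [Fintype l] [Fintype o] (hα0 : 0 ≤ α0) (j : ℕ) :
    lpNorm p (bornK α0 B G C (j + 1) fun _ => η) ≤
      nuConst α0 p q B C * lpNorm p η ^ (j + 1) * muConst α0 q G ^ j := by
  have : Fact (1 ≤ p) := ⟨HolderConjugate.one_le p q⟩
  set c := α0 * lpNorm p η ^ (j + 1) * muConst α0 q G ^ j
  have hc : 0 ≤ c := mul_nonneg (mul_nonneg hα0 (pow_nonneg (lpNorm_nonneg η) _))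
    (pow_nonneg (muConst_nonneg hα0 q G) _)
  calc lpNorm p (bornK α0 B G C (j + 1) fun _ => η)
      ≤ lpNorm p (c • fun rs : l × o => lpNorm q (B rs.1) * lpNorm q fun v => C v rs.2) :=
        lpNorm_mono fun ⟨r, s⟩ => (norm_bornK_const_apply_le B G C η hα0 j r s).trans
          (le_abs_self _)
    _ = c * lpNorm p (fun rs : l × o => lpNorm q (B rs.1) * lpNorm q fun v => C v rs.2) := by
        rw [lpNorm_smul, abs_of_nonneg hc]
    _ ≤ c * (lpNorm p (fun r => lpNorm q (B r)) * lpNorm p fun s => lpNorm q fun v => C v s) :=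
        mul_le_mul_of_nonneg_left
          (lpNorm_prod_mul_le (fun r => lpNorm q (B r)) fun s => lpNorm q fun v => C v s) hc
    _ = _ := by rw [nuConst]; ring

end Born

theorem forward_born_tail_bound_general
    (p q : ℝ≥0∞) (hp : 1 ≤ p) (hpq : 1 / p + 1 / q = 1)
    (α0 : ℝ) (hα0 : 0 < α0) (B : Matrix R V ℂ) (G : Matrix V V ℂ) (C : Matrix V S ℂ)
    (η : V → ℂ) (hη : muConst α0 q G * lpNorm p η < 1) (N : ℕ) :
    lpNorm p (∑' j : ℕ, bornK α0 B G C (j + N + 1) fun _ => η) ≤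
      nuConst α0 p q B C * lpNorm p η ^ (N + 1) * muConst α0 q G ^ N /
        (1 - muConst α0 q G * lpNorm p η) := by
  have : Fact (1 ≤ p) := ⟨hp⟩
  have : p.HolderConjugate q := ⟨by simpa using hpq⟩
  set μ := muConst α0 q G
  set h := lpNorm p η
  have hμh : 0 ≤ μ * h := mul_nonneg (muConst_nonneg hα0.le q G) (lpNorm_nonneg η)
  calc _ ≤ ∑' j : ℕ, nuConst α0 p q B C * h ^ (N + 1) * μ ^ N * (μ * h) ^ j :=
        lpNorm_tsum_le ((summable_geometric_of_lt_one hμh hη).mul_left _) fun j =>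
          (lpNorm_bornK_const_le B G C η hα0.le (j + N)).trans_eq (by ring)
    _ = _ := by rw [tsum_mul_left, tsum_geometric_of_lt_one hμh hη, div_eq_mul_inv]

theorem forward_born_tail_bound [Nonempty V] [Nonempty R] [Nonempty S]
    (p q : ℝ≥0∞) (hp : 1 ≤ p) (hq : 1 ≤ q) (hpq : 1 / p + 1 / q = 1)
    (α0 : ℝ) (hα0 : 0 < α0) (B : Matrix R V ℂ) (G : Matrix V V ℂ) (C : Matrix V S ℂ)
    (η : V → ℂ) (hη : muConst α0 q G * lpNorm p η < 1) (N : ℕ) :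
    lpNorm p (∑' j : ℕ, bornK α0 B G C (j + N + 1) fun _ => η) ≤
      nuConst α0 p q B C * lpNorm p η ^ (N + 1) * muConst α0 q G ^ N /
        (1 - muConst α0 q G * lpNorm p η) :=
  forward_born_tail_bound_general p q hp hpq α0 hα0 B G C η hη N
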